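/- Let d ≥ 1, let x be uniformly distributed on {−1,+1}^d, let φ(z) = max(z,0), and for subsets A ⊆ {1,…,d} let χ_A(x) = ∏_{i∈A} x_i, Σ(w) = E_x[φ(w·x)²], J_A(w) = E_x[φ(w·x)·χ_A(x)]. Fix σ_a > 0, κ > 0, N > 0, γ ∈ ℝ and m_S with |m_S| ≤ 1, fix an index set S and a target coupling J_Δ(w) := J_Y(w) − m_S·J_S(w) where J_Y(w) := J_S(w), and define g(w) := (1/2)·ln(σ_a⁻² + Σ(w)/(κ²·N^{2γ})) − J_Δ(w)² / (2·κ⁴·N^{2γ}·(σ_a⁻² + Σ(w)/(κ²·N^{2γ}))). Then there exists a constant L* > 0, depending only on σ_a, κ, N, γ (and not on d, on the coordinate index j, or on w_{−j}), such that for every coordinate j and every fixed w_{−j}, the map t ↦ g(w_{−j}, t) (the one-dimensional section of g in coordinate j) is continuous and piecewise smooth with finitely many non-smooth points, and at every point t where it is twice differentiable its second derivative satisfies |∂_t² g(w_{−j}, t)| ≤ L*. -/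

import Mathlib

/-- Expectation of `f` over `x` uniform on the Boolean cube `{−1,+1}^d`. -/
noncomputable def cubeE (d : ℕ) (f : (Fin d → ℝ) → ℝ) : ℝ :=
  (∑ ε : Fin d → Bool, f fun j => if ε j then 1 else -1) / 2 ^ d

/-- Neuron self-energy Σ(w) = E_x[φ(w·x)²] with φ = ReLU. -/
noncomputable def SigmaFun (d : ℕ) (w : Fin d → ℝ) : ℝ :=
  cubeE d fun x => max (∑ j, w j * x j) 0 ^ 2

/-- Neuron–feature coupling J_A(w) = E_x[φ(w·x)·χ_A(x)] with φ = ReLU. -/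
noncomputable def Jfun (d : ℕ) (A : Finset (Fin d)) (w : Fin d → ℝ) : ℝ :=
  cubeE d fun x => max (∑ j, w j * x j) 0 * ∏ i ∈ A, x i

/-- The data-coupling term g(w) of the MF-ARD single-neuron action, with
J_Y = J_S and J_Δ(w) = J_Y(w) − m_S·J_S(w). -/
noncomputable def gfun (d : ℕ) (S : Finset (Fin d)) (σa κ N γ mS : ℝ)
    (w : Fin d → ℝ) : ℝ :=
  1 / 2 * Real.log (σa⁻¹ ^ 2 + SigmaFun d w / (κ ^ 2 * N ^ (2 * γ))) -
    (Jfun d S w - mS * Jfun d S w) ^ 2 /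
      (2 * κ ^ 4 * N ^ (2 * γ) * (σa⁻¹ ^ 2 + SigmaFun d w / (κ ^ 2 * N ^ (2 * γ))))

open Filter Set Topology

noncomputable def Xc {d : ℕ} (ε : Fin d → Bool) : Fin d → ℝ := fun i => if ε i then 1 else -1

noncomputable def ac {d : ℕ} (w : Fin d → ℝ) (j : Fin d) (ε : Fin d → Bool) : ℝ :=
  (∑ i, w i * Xc ε i) - w j * Xc ε j

noncomputable def bc {d : ℕ} (j : Fin d) (ε : Fin d → Bool) : ℝ := Xc ε j

noncomputable def chic {d : ℕ} (S : Finset (Fin d)) (ε : Fin d → Bool) : ℝ := ∏ i ∈ S, Xc ε i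

lemma bc_sq {d : ℕ} (j : Fin d) (ε : Fin d → Bool) : bc j ε ^ 2 = 1 := by
  unfold bc Xc; by_cases h : ε j <;> simp [h]

lemma bc_abs {d : ℕ} (j : Fin d) (ε : Fin d → Bool) : |bc j ε| = 1 := by
  unfold bc Xc; by_cases h : ε j <;> simp [h]

lemma chic_sq {d : ℕ} (S : Finset (Fin d)) (ε : Fin d → Bool) : chic S ε ^ 2 = 1 := by
  unfold chic
  rw [← Finset.prod_pow]
  apply Finset.prod_eq_one
  intro i _
  unfold Xc; by_cases h : ε i <;> simp [h]

lemma chic_abs {d : ℕ} (S : Finset (Fin d)) (ε : Fin d → Bool) : |chic S ε| = 1 := by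
  have h := chic_sq S ε
  have := sq_abs (chic S ε)
  nlinarith [abs_nonneg (chic S ε)]

lemma dot_eq {d : ℕ} (w : Fin d → ℝ) (j : Fin d) (t : ℝ) (ε : Fin d → Bool) :
    (∑ i, Function.update w j t i * Xc ε i) = ac w j ε + bc j ε * t := by
  have h : (∑ i, Function.update w j t i * Xc ε i) - (∑ i, w i * Xc ε i)
      = (t - w j) * Xc ε j := by
    rw [← Finset.sum_sub_distrib, Finset.sum_eq_single j]
    · rw [Function.update_self]; ring
    · intro i _ hij
      rw [Function.update_of_ne hij]; ring
    · intro h; exact absurd (Finset.mem_univ j) h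
  unfold ac bc
  linear_combination h

lemma Sigma_sec {d : ℕ} (w : Fin d → ℝ) (j : Fin d) (t : ℝ) :
    SigmaFun d (Function.update w j t)
      = (∑ ε : Fin d → Bool, max (ac w j ε + bc j ε * t) 0 ^ 2) / 2 ^ d := by
  unfold SigmaFun cubeE
  congr 1
  refine Finset.sum_congr rfl fun ε _ => ?_
  show ((∑ i, Function.update w j t i * Xc ε i) ⊔ 0) ^ 2 = _
  rw [dot_eq]

lemma J_sec {d : ℕ} (S : Finset (Fin d)) (w : Fin d → ℝ) (j : Fin d) (t : ℝ) :
    Jfun d S (Function.update w j t)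
      = (∑ ε : Fin d → Bool, max (ac w j ε + bc j ε * t) 0 * chic S ε) / 2 ^ d := by
  unfold Jfun cubeE
  congr 1
  refine Finset.sum_congr rfl fun ε _ => ?_
  show ((∑ i, Function.update w j t i * Xc ε i) ⊔ 0) * ∏ i ∈ S, Xc ε i = _
  rw [dot_eq]
  rfl

private lemma bridge {f : ℝ → ℝ} {L : ℝ} (E : Finset ℝ) (hcont : Continuous f)
    (hd1 : ∀ s, s ∉ E → DifferentiableAt ℝ f s)
    (hd2 : ∀ s, s ∉ E → ∃ y : ℝ, |y| ≤ L ∧ HasDerivAt (deriv f) y s)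
    {t : ℝ} (h1 : DifferentiableAt ℝ f t) (h2 : DifferentiableAt ℝ (deriv f) t) :
    |deriv (deriv f) t| ≤ L := by
  obtain ⟨δ, hδ, hI⟩ : ∃ δ : ℝ, 0 < δ ∧ ∀ s ∈ Set.Ioo t (t + δ), s ∉ E := by
    by_cases h : (E.filter fun x => t < x).Nonempty
    · refine ⟨(E.filter fun x => t < x).min' h - t, ?_, ?_⟩
      · have hm := (E.filter fun x => t < x).min'_mem h
        rw [Finset.mem_filter] at hm
        linarith [hm.2]
      · rintro s ⟨hs1, hs2⟩ hsE
        have : (E.filter fun x => t < x).min' h ≤ s :=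
          Finset.min'_le _ _ (Finset.mem_filter.2 ⟨hsE, hs1⟩)
        linarith
    · exact ⟨1, one_pos, fun s hs hsE => h ⟨s, Finset.mem_filter.2 ⟨hsE, hs.1⟩⟩⟩
  have hd2' : ∀ s : ℝ, ∃ y : ℝ, s ∈ Set.Ioo t (t + δ) → |y| ≤ L ∧ HasDerivAt (deriv f) y s := by
    intro s
    by_cases hs : s ∈ Set.Ioo t (t + δ)
    · obtain ⟨y, hy⟩ := hd2 s (hI s hs); exact ⟨y, fun _ => hy⟩
    · exact ⟨0, fun h => absurd h hs⟩
  choose g2 hg2 using hd2'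
  have hL0 : 0 ≤ L := by
    rcases hd2 (t + δ/2) (hI _ ⟨by linarith, by linarith⟩) with ⟨y, hy, _⟩
    exact le_trans (abs_nonneg y) hy
  have hLip : ∀ s ∈ Set.Ioo t (t + δ), ∀ s' ∈ Set.Ioo t (t + δ),
      |deriv f s' - deriv f s| ≤ L * |s' - s| := by
    intro s hs s' hs'
    have := (convex_Ioo t (t + δ)).norm_image_sub_le_of_norm_hasDerivWithin_le
      (f := deriv f) (f' := g2)
      (fun x hx => ((hg2 x hx).2).hasDerivWithinAt)
      (fun x hx => by rw [Real.norm_eq_abs]; exact (hg2 x hx).1) hs hs'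
    simpa [Real.norm_eq_abs] using this
  have step1 : ∀ s ∈ Set.Ioo t (t + δ), |deriv f t - deriv f s| ≤ L * (s - t) := by
    intro s hs
    have hts : t < s := hs.1
    have key : ∀ u ∈ Set.Ioo t s, |(f u - f t) / (u - t) - deriv f s| ≤ L * (s - t) := by
      intro u hu
      have hsub : Set.Ioo t u ⊆ Set.Ioo t (t + δ) :=
        Set.Ioo_subset_Ioo le_rfl (le_of_lt (lt_trans hu.2 hs.2))
      obtain ⟨ξ, hξ, hξeq⟩ := exists_hasDerivAt_eq_slope f (deriv f) hu.1
        hcont.continuousOn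
        (fun x hx => (hd1 x (hI x (hsub hx))).hasDerivAt)
      rw [← hξeq]
      have hξI : ξ ∈ Set.Ioo t (t + δ) := hsub hξ
      have h1' := hLip s hs ξ hξI
      have habs : |ξ - s| ≤ s - t := by
        rw [abs_sub_comm, abs_of_pos (by linarith [hξ.2, hu.2] : (0:ℝ) < s - ξ)]
        linarith [hξ.1, hu.2]
      have := mul_le_mul_of_nonneg_left habs hL0
      linarith
    have hmem : Set.Ioo t s ∈ 𝓝[>] t := Ioo_mem_nhdsGT_of_mem ⟨le_refl t, hts⟩
    have htend : Tendsto (fun u => (f u - f t) / (u - t)) (𝓝[>] t) (𝓝 (deriv f t)) := by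
      have h' := hasDerivAt_iff_tendsto_slope.1 h1.hasDerivAt
      have h'' := h'.mono_left
        (nhdsWithin_mono t (fun x hx => Set.mem_compl_singleton_iff.2 (ne_of_gt hx)))
      refine h''.congr' ?_
      filter_upwards [self_mem_nhdsWithin] with u hu
      rw [slope_def_field]
    refine le_of_tendsto ((htend.sub_const (deriv f s)).abs) ?_
    filter_upwards [hmem] with u hu using key u hu
  have htend2 : Tendsto (slope (deriv f) t) (𝓝[>] t) (𝓝 (deriv (deriv f) t)) :=
    (hasDerivAt_iff_tendsto_slope.1 h2.hasDerivAt).mono_left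
      (nhdsWithin_mono t (fun x hx => Set.mem_compl_singleton_iff.2 (ne_of_gt hx)))
  refine le_of_tendsto htend2.abs ?_
  have hm2 : Set.Ioo t (t + δ) ∈ 𝓝[>] t := Ioo_mem_nhdsGT_of_mem ⟨le_refl t, by linarith⟩
  filter_upwards [hm2] with u hu
  have hslope : slope (deriv f) t u = (deriv f u - deriv f t) / (u - t) := by
    rw [slope_def_field]
  rw [hslope, abs_div, abs_of_pos (by linarith [hu.1] : (0:ℝ) < u - t),
    div_le_iff₀ (by linarith [hu.1] : (0:ℝ) < u - t)]
  calc |deriv f u - deriv f t| = |deriv f t - deriv f u| := abs_sub_comm _ _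
    _ ≤ L * (u - t) := step1 u hu


lemma sum_deriv_sq {ι : Type*} [Fintype ι] (π a b : ι → ℝ) (D : ℝ) (s : ℝ) :
    HasDerivAt (fun s => (∑ ε, π ε * (a ε + b ε * s) ^ 2) / D)
      ((∑ ε, π ε * (2 * (a ε + b ε * s) * b ε)) / D) s := by
  have h : ∀ ε ∈ Finset.univ, HasDerivAt (fun s : ℝ => π ε * (a ε + b ε * s) ^ 2)
      (π ε * (2 * (a ε + b ε * s) * b ε)) s := by
    intro ε _
    have hl : HasDerivAt (fun s : ℝ => a ε + b ε * s) (b ε) s := by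
      simpa using ((hasDerivAt_id s).const_mul (b ε)).const_add (a ε)
    have h2 := (hl.fun_pow 2).const_mul (π ε)
    refine h2.congr_deriv ?_
    push_cast; ring
  exact (HasDerivAt.fun_sum h).div_const D

lemma sum_deriv_lin {ι : Type*} [Fintype ι] (π a b : ι → ℝ) (D : ℝ) (s : ℝ) :
    HasDerivAt (fun s => (∑ ε, π ε * (2 * (a ε + b ε * s) * b ε)) / D)
      ((∑ ε, π ε * (2 * b ε * b ε)) / D) s := by
  have h : ∀ ε ∈ Finset.univ, HasDerivAt (fun s : ℝ => π ε * (2 * (a ε + b ε * s) * b ε))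
      (π ε * (2 * b ε * b ε)) s := by
    intro ε _
    have hl : HasDerivAt (fun s : ℝ => a ε + b ε * s) (b ε) s := by
      simpa using ((hasDerivAt_id s).const_mul (b ε)).const_add (a ε)
    exact ((hl.const_mul 2).mul_const (b ε)).const_mul (π ε)
  exact (HasDerivAt.fun_sum h).div_const D

lemma sum_deriv_chi {ι : Type*} [Fintype ι] (π a b χ : ι → ℝ) (D m : ℝ) (s : ℝ) :
    HasDerivAt (fun s => m * ((∑ ε, π ε * ((a ε + b ε * s) * χ ε)) / D))
      (m * ((∑ ε, π ε * (b ε * χ ε)) / D)) s := by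
  have h : ∀ ε ∈ Finset.univ, HasDerivAt (fun s : ℝ => π ε * ((a ε + b ε * s) * χ ε))
      (π ε * (b ε * χ ε)) s := by
    intro ε _
    have hl : HasDerivAt (fun s : ℝ => a ε + b ε * s) (b ε) s := by
      simpa using ((hasDerivAt_id s).const_mul (b ε)).const_add (a ε)
    exact (hl.mul_const (χ ε)).const_mul (π ε)
  exact ((HasDerivAt.fun_sum h).div_const D).const_mul m

lemma model_deriv1 {Q Q1 V : ℝ → ℝ} {V1 c K C : ℝ}
    (hC : C ≠ 0) (hu : ∀ s, 0 < c + Q s / K)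
    (hQd : ∀ s, HasDerivAt Q (Q1 s) s) (hVd : ∀ s, HasDerivAt V V1 s) (s : ℝ) :
    HasDerivAt (fun s => 1 / 2 * Real.log (c + Q s / K) - (V s) ^ 2 / (C * (c + Q s / K)))
      (1 / 2 * (Q1 s / K / (c + Q s / K)) -
        ((2 * V s * V1) * (C * (c + Q s / K)) - (V s) ^ 2 * (C * (Q1 s / K)))
          / (C * (c + Q s / K)) ^ 2) s := by
  have hud : HasDerivAt (fun s => c + Q s / K) (Q1 s / K) s := ((hQd s).div_const K).const_add c
  have hlog := (hud.log (hu s).ne').const_mul (1 / 2 : ℝ)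
  have hden := hud.const_mul C
  have hCu : C * (c + Q s / K) ≠ 0 := mul_ne_zero hC (hu s).ne'
  have hdiv := ((hVd s).fun_pow 2).fun_div hden hCu
  have h := hlog.fun_sub hdiv
  refine h.congr_deriv ?_
  push_cast; ring

lemma model_deriv2 {Q Q1 V : ℝ → ℝ} {Q2 V1 c K C : ℝ}
    (hK : K ≠ 0) (hC : C ≠ 0) (hu : ∀ s, 0 < c + Q s / K)
    (hQd : ∀ s, HasDerivAt Q (Q1 s) s) (hQ1d : ∀ s, HasDerivAt Q1 Q2 s)
    (hVd : ∀ s, HasDerivAt V V1 s) (s : ℝ) :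
    HasDerivAt (fun s => 1 / 2 * (Q1 s / K / (c + Q s / K)) -
        ((2 * V s * V1) * (C * (c + Q s / K)) - (V s) ^ 2 * (C * (Q1 s / K)))
          / (C * (c + Q s / K)) ^ 2)
      (Q2 / K / (2 * (c + Q s / K)) - (Q1 s / K) ^ 2 / (2 * (c + Q s / K) ^ 2)
        - 2 * V1 ^ 2 / (C * (c + Q s / K))
        + 4 * V s * V1 * (Q1 s / K) / (C * (c + Q s / K) ^ 2)
        + (V s) ^ 2 * (Q2 / K) / (C * (c + Q s / K) ^ 2)
        - 2 * (V s) ^ 2 * (Q1 s / K) ^ 2 / (C * (c + Q s / K) ^ 3)) s := by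
  have hud : HasDerivAt (fun s => c + Q s / K) (Q1 s / K) s := ((hQd s).div_const K).const_add c
  have hCu : C * (c + Q s / K) ≠ 0 := mul_ne_zero hC (hu s).ne'
  have t1 := (((hQ1d s).div_const K).fun_div hud (hu s).ne').const_mul (1 / 2 : ℝ)
  have hp := ((hVd s).const_mul 2).mul_const V1
  have hq2 := hud.const_mul C
  have hA := hp.fun_mul hq2
  have hB := ((hVd s).fun_pow 2).fun_mul (((hQ1d s).div_const K).const_mul C)
  have hN2 := hA.fun_sub hB
  have hD2 := hq2.fun_pow 2
  have hdiv2 := hN2.fun_div hD2 (pow_ne_zero 2 hCu)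
  have h := t1.fun_sub hdiv2
  refine h.congr_deriv ?_
  have hus : c + Q s / K ≠ 0 := (hu s).ne'
  push_cast
  generalize hgen : c + Q s / K = A at hus ⊢
  generalize hgen2 : Q1 s / K = B at *
  field_simp
  ring


lemma abs_add6 (x1 x2 x3 x4 x5 x6 : ℝ) :
    |x1 + x2 + x3 + x4 + x5 + x6| ≤ |x1| + |x2| + |x3| + |x4| + |x5| + |x6| := by
  calc |x1 + x2 + x3 + x4 + x5 + x6| ≤ |x1 + x2 + x3 + x4 + x5| + |x6| := abs_add_le _ _
    _ ≤ (|x1 + x2 + x3 + x4| + |x5|) + |x6| := by gcongr; exact abs_add_le _ _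
    _ ≤ ((|x1 + x2 + x3| + |x4|) + |x5|) + |x6| := by gcongr; exact abs_add_le _ _
    _ ≤ (((|x1 + x2| + |x3|) + |x4|) + |x5|) + |x6| := by gcongr; exact abs_add_le _ _
    _ ≤ ((((|x1| + |x2|) + |x3|) + |x4|) + |x5|) + |x6| := by gcongr; exact abs_add_le _ _

set_option maxHeartbeats 1000000 in
lemma scalar_bound {A B W Q2 V1 QT c K C : ℝ} (hc : 0 < c) (hK : 0 < K) (hC : 0 < C)
    (hA : c ≤ A) (hQT : QT = K * (A - c))
    (hB2 : B ^ 2 ≤ 4 * QT) (hW2 : W ^ 2 ≤ 4 * QT) (hWB : |W * B| ≤ 4 * QT)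
    (hV1 : |V1| ≤ 2) (hQ2a : 0 ≤ Q2) (hQ2b : Q2 ≤ 2) :
    |Q2 / K / (2 * A) - (B / K) ^ 2 / (2 * A ^ 2) - 2 * V1 ^ 2 / (C * A)
      + 4 * W * V1 * (B / K) / (C * A ^ 2) + W ^ 2 * (Q2 / K) / (C * A ^ 2)
      - 2 * W ^ 2 * (B / K) ^ 2 / (C * A ^ 3)|
      ≤ 3 / (K * c) + 80 / (C * c) := by
  have hA0 : 0 < A := lt_of_lt_of_le hc hA
  have hAc : 0 ≤ A - c := sub_nonneg.2 hA
  have hB2' : B ^ 2 ≤ 4 * (K * (A - c)) := by rw [← hQT]; exact hB2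
  have hW2' : W ^ 2 ≤ 4 * (K * (A - c)) := by rw [← hQT]; exact hW2
  have hWB' : |W * B| ≤ 4 * (K * (A - c)) := by rw [← hQT]; exact hWB
  have hV12 : V1 ^ 2 ≤ 4 := by nlinarith [abs_nonneg V1, sq_abs V1]
  have hkey : c * (A - c) ≤ A ^ 2 := by nlinarith [sq_nonneg (A - c / 2)]
  have hkey2 : (A - c) ^ 2 * c ≤ A ^ 3 := by nlinarith [sq_nonneg (A - c), sq_nonneg A]
  have hT1 : |Q2 / K / (2 * A)| ≤ 1 / (K * c) := by
    rw [abs_of_nonneg (by positivity), div_div, div_le_div_iff₀ (by positivity) (by positivity)]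
    nlinarith [mul_nonneg (sub_nonneg.2 hQ2b) (mul_pos hK hc).le,
      mul_le_mul_of_nonneg_left hA hK.le]
  have hT2 : |(B / K) ^ 2 / (2 * A ^ 2)| ≤ 2 / (K * c) := by
    rw [abs_of_nonneg (by positivity), div_pow, div_div,
      div_le_div_iff₀ (by positivity) (by positivity)]
    have h5 : B ^ 2 * (K * c) ≤ 4 * (K * (A - c)) * (K * c) :=
      mul_le_mul_of_nonneg_right hB2' (by positivity)
    have h4 := mul_le_mul_of_nonneg_left hkey (by positivity : (0:ℝ) ≤ 4 * K ^ 2)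
    nlinarith [h5, h4]
  have hT3 : |2 * V1 ^ 2 / (C * A)| ≤ 8 / (C * c) := by
    rw [abs_of_nonneg (by positivity), div_le_div_iff₀ (by positivity) (by positivity)]
    nlinarith [mul_nonneg (sub_nonneg.2 hV12) (mul_pos hC hc).le,
      mul_le_mul_of_nonneg_left hA hC.le]
  have hT4 : |4 * W * V1 * (B / K) / (C * A ^ 2)| ≤ 32 / (C * c) := by
    rw [abs_div, abs_of_pos (by positivity : (0:ℝ) < C * A ^ 2),
      div_le_div_iff₀ (by positivity) (by positivity)]
    have h41 : |4 * W * V1 * (B / K)| ≤ 32 * (A - c) := by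
      rw [show 4 * W * V1 * (B / K) = 4 * ((W * B) * V1) / K from by ring, abs_div,
        abs_of_pos hK, div_le_iff₀ hK]
      calc |4 * ((W * B) * V1)| = 4 * (|W * B| * |V1|) := by
            rw [abs_mul, abs_mul]; norm_num
        _ ≤ 4 * ((4 * (K * (A - c))) * 2) := by
            have hp : (0:ℝ) ≤ 4 * (K * (A - c)) := by nlinarith [mul_nonneg hK.le hAc]
            have := mul_le_mul hWB' hV1 (abs_nonneg V1) hp
            linarith
        _ = 32 * (A - c) * K := by ring
    have h42 := mul_le_mul_of_nonneg_right h41 (mul_pos hC hc).le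
    have h43 := mul_le_mul_of_nonneg_left hkey (by positivity : (0:ℝ) ≤ 32 * C)
    nlinarith [h42, h43]
  have hT5 : |W ^ 2 * (Q2 / K) / (C * A ^ 2)| ≤ 8 / (C * c) := by
    rw [abs_of_nonneg (by positivity), div_le_div_iff₀ (by positivity) (by positivity)]
    have h51 : W ^ 2 * (Q2 / K) ≤ (4 * (K * (A - c))) * (2 / K) := by
      apply mul_le_mul hW2' _ (by positivity) (by positivity)
      gcongr
    have h52 : (4 * (K * (A - c))) * (2 / K) = 8 * (A - c) := by
      field_simp; ring
    rw [h52] at h51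
    have h53 := mul_le_mul_of_nonneg_right h51 (mul_pos hC hc).le
    have h54 := mul_le_mul_of_nonneg_left hkey (by positivity : (0:ℝ) ≤ 8 * C)
    nlinarith [h53, h54]
  have hT6 : |2 * W ^ 2 * (B / K) ^ 2 / (C * A ^ 3)| ≤ 32 / (C * c) := by
    rw [abs_of_nonneg (by positivity), div_le_div_iff₀ (by positivity) (by positivity)]
    have h61 : W ^ 2 * B ^ 2 ≤ 16 * (K * (A - c)) ^ 2 := by
      nlinarith [hW2', hB2', sq_nonneg W, sq_nonneg B, mul_nonneg hK.le hAc]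
    have h62 : 2 * W ^ 2 * (B / K) ^ 2 ≤ 32 * (A - c) ^ 2 := by
      have he : 2 * W ^ 2 * (B / K) ^ 2 = 2 * (W ^ 2 * B ^ 2) / K ^ 2 := by ring
      rw [he, div_le_iff₀ (by positivity : (0:ℝ) < K ^ 2)]
      nlinarith [h61]
    have h63 := mul_le_mul_of_nonneg_right h62 (mul_pos hC hc).le
    have h64 := mul_le_mul_of_nonneg_left hkey2 (by positivity : (0:ℝ) ≤ 32 * C)
    nlinarith [h63, h64]
  calc |Q2 / K / (2 * A) - (B / K) ^ 2 / (2 * A ^ 2) - 2 * V1 ^ 2 / (C * A)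
      + 4 * W * V1 * (B / K) / (C * A ^ 2) + W ^ 2 * (Q2 / K) / (C * A ^ 2)
      - 2 * W ^ 2 * (B / K) ^ 2 / (C * A ^ 3)|
      ≤ |Q2 / K / (2 * A)| + |(B / K) ^ 2 / (2 * A ^ 2)| + |2 * V1 ^ 2 / (C * A)|
        + |4 * W * V1 * (B / K) / (C * A ^ 2)| + |W ^ 2 * (Q2 / K) / (C * A ^ 2)|
        + |2 * W ^ 2 * (B / K) ^ 2 / (C * A ^ 3)| := by
        have h := abs_add6 (Q2 / K / (2 * A)) (-((B / K) ^ 2 / (2 * A ^ 2)))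
          (-(2 * V1 ^ 2 / (C * A))) (4 * W * V1 * (B / K) / (C * A ^ 2))
          (W ^ 2 * (Q2 / K) / (C * A ^ 2)) (-(2 * W ^ 2 * (B / K) ^ 2 / (C * A ^ 3)))
        simpa [abs_neg, sub_eq_add_neg] using h
    _ ≤ 1 / (K * c) + 2 / (K * c) + 8 / (C * c) + 32 / (C * c) + 8 / (C * c) + 32 / (C * c) := by
        linarith [hT1, hT2, hT3, hT4, hT5, hT6]
    _ = 3 / (K * c) + 80 / (C * c) := by ring

lemma sq_div_le {s1 SP Dd : ℝ} (hD : 0 < Dd) (hCS : s1 ^ 2 ≤ SP * Dd) :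
    (2 * s1 / Dd) ^ 2 ≤ 4 * (SP / Dd) := by
  rw [show (2 * s1 / Dd) ^ 2 = 4 * s1 ^ 2 / Dd ^ 2 from by ring,
    show (4:ℝ) * (SP / Dd) = 4 * SP / Dd from by ring,
    div_le_div_iff₀ (by positivity) hD]
  nlinarith [hCS, hD, mul_nonneg (mul_nonneg (sub_nonneg.2 hCS) hD.le) (by norm_num : (0:ℝ) ≤ 4)]

lemma sq_div_le' {m s2 SP Dd : ℝ} (hD : 0 < Dd) (hCS : s2 ^ 2 ≤ SP * Dd) (hm2 : m ^ 2 ≤ 4) :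
    (m * (s2 / Dd)) ^ 2 ≤ 4 * (SP / Dd) := by
  rw [show (m * (s2 / Dd)) ^ 2 = m ^ 2 * s2 ^ 2 / Dd ^ 2 from by ring,
    show (4:ℝ) * (SP / Dd) = 4 * SP / Dd from by ring,
    div_le_div_iff₀ (by positivity) hD]
  nlinarith [mul_nonneg (mul_nonneg (sub_nonneg.2 hm2) (sq_nonneg s2)) hD.le,
    mul_nonneg (mul_nonneg (sub_nonneg.2 hCS) hD.le) (by norm_num : (0:ℝ) ≤ 4)]

set_option maxHeartbeats 1000000 in
lemma local_data (σa κ N γ : ℝ) (hσa : 0 < σa) (hκ : 0 < κ) (hN : 0 < N)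
    {d : ℕ} (S : Finset (Fin d)) (mS : ℝ) (hmS : |mS| ≤ 1) (j : Fin d) (w : Fin d → ℝ)
    (t : ℝ) (ht : ∀ ε : Fin d → Bool, ac w j ε + bc j ε * t ≠ 0) :
    ∃ F F1 F2 : ℝ → ℝ,
      (fun s => gfun d S σa κ N γ mS (Function.update w j s)) =ᶠ[𝓝 t] F ∧
      ContDiff ℝ (⊤ : WithTop ℕ∞) F ∧
      (∀ s, HasDerivAt F (F1 s) s) ∧
      (∀ s, HasDerivAt F1 (F2 s) s) ∧
      |F2 t| ≤ 3 / (κ ^ 2 * N ^ (2 * γ) * σa⁻¹ ^ 2)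
               + 80 / (2 * κ ^ 4 * N ^ (2 * γ) * σa⁻¹ ^ 2) := by
  have hNγ : (0:ℝ) < N ^ (2 * γ) := Real.rpow_pos_of_pos hN _
  have hc : (0:ℝ) < σa⁻¹ ^ 2 := by positivity
  have hK : (0:ℝ) < κ ^ 2 * N ^ (2 * γ) := by positivity
  have hC : (0:ℝ) < 2 * κ ^ 4 * N ^ (2 * γ) := by positivity
  have hD : (0:ℝ) < 2 ^ d := by positivity
  -- notation
  let a : (Fin d → Bool) → ℝ := ac w j
  let b : (Fin d → Bool) → ℝ := bc j
  let χ : (Fin d → Bool) → ℝ := chic S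
  let π : (Fin d → Bool) → ℝ := fun ε => if 0 < a ε + b ε * t then 1 else 0
  have hπ01 : ∀ ε, 0 ≤ π ε ∧ π ε ≤ 1 := by
    intro ε; constructor <;> · simp only [π]; split_ifs <;> norm_num
  -- the model functions
  set Q : ℝ → ℝ := fun s => (∑ ε, π ε * (a ε + b ε * s) ^ 2) / 2 ^ d with hQ_def
  set Q1 : ℝ → ℝ := fun s => (∑ ε, π ε * (2 * (a ε + b ε * s) * b ε)) / 2 ^ d with hQ1_def
  set Q2 : ℝ := (∑ ε, π ε * (2 * b ε * b ε)) / 2 ^ d with hQ2_def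
  set V : ℝ → ℝ := fun s => (1 - mS) * ((∑ ε, π ε * ((a ε + b ε * s) * χ ε)) / 2 ^ d)
    with hV_def
  set V1 : ℝ := (1 - mS) * ((∑ ε, π ε * (b ε * χ ε)) / 2 ^ d) with hV1_def
  have hQnn : ∀ s, 0 ≤ Q s := by
    intro s
    apply div_nonneg _ hD.le
    exact Finset.sum_nonneg fun ε _ => mul_nonneg (hπ01 ε).1 (sq_nonneg _)
  have hu : ∀ s, 0 < σa⁻¹ ^ 2 + Q s / (κ ^ 2 * N ^ (2 * γ)) := by
    intro s
    have := hQnn s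
    positivity
  have hQd : ∀ s, HasDerivAt Q (Q1 s) s := fun s => sum_deriv_sq π a b _ s
  have hQ1d : ∀ s, HasDerivAt Q1 Q2 s := fun s => sum_deriv_lin π a b _ s
  have hVd : ∀ s, HasDerivAt V V1 s := fun s => sum_deriv_chi π a b χ _ _ s
  refine ⟨fun s => 1 / 2 * Real.log (σa⁻¹ ^ 2 + Q s / (κ ^ 2 * N ^ (2 * γ)))
      - (V s) ^ 2 / (2 * κ ^ 4 * N ^ (2 * γ) * (σa⁻¹ ^ 2 + Q s / (κ ^ 2 * N ^ (2 * γ)))),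
    _, _, ?_, ?_, fun s => model_deriv1 hC.ne' hu hQd hVd s,
    fun s => model_deriv2 hK.ne' hC.ne' hu hQd hQ1d hVd s, ?_⟩
  · -- eventual equality
    have hsign : ∀ᶠ s in 𝓝 t, ∀ ε : Fin d → Bool,
        max (a ε + b ε * s) 0 = π ε * (a ε + b ε * s) := by
      rw [eventually_all]
      intro ε
      rcases lt_or_gt_of_ne (ht ε) with hneg | hpos
      · have hopen : IsOpen {s : ℝ | a ε + b ε * s < 0} :=
          isOpen_lt (by continuity) continuous_const
        filter_upwards [hopen.mem_nhds (by exact hneg)] with s hs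
        rw [max_eq_right (le_of_lt hs)]
        simp only [π, a, b, if_neg (not_lt.2 hneg.le)]
        ring
      · have hopen : IsOpen {s : ℝ | 0 < a ε + b ε * s} :=
          isOpen_lt continuous_const (by continuity)
        filter_upwards [hopen.mem_nhds (by exact hpos)] with s hs
        rw [max_eq_left (le_of_lt hs)]
        simp only [π, a, b, if_pos hpos]
        ring
    filter_upwards [hsign] with s hs
    have hSig : SigmaFun d (Function.update w j s) = Q s := by
      rw [Sigma_sec, hQ_def]
      congr 1
      refine Finset.sum_congr rfl fun ε _ => ?_
      rw [hs ε]
      simp only [π]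
      split_ifs <;> ring
    have hJ2 : (Jfun d S (Function.update w j s) - mS * Jfun d S (Function.update w j s)) ^ 2
        = (V s) ^ 2 := by
      have hJ : Jfun d S (Function.update w j s)
          = (∑ ε, π ε * ((a ε + b ε * s) * χ ε)) / 2 ^ d := by
        rw [J_sec]
        congr 1
        refine Finset.sum_congr rfl fun ε _ => ?_
        rw [hs ε]
        ring
      rw [hJ, hV_def]
      ring
    simp only [gfun, hSig, hJ2]
  · -- smoothness
    have hacd : ∀ ε : Fin d → Bool, ContDiff ℝ (⊤ : WithTop ℕ∞) (fun s : ℝ => a ε + b ε * s) :=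
      fun ε => contDiff_const.add (contDiff_const.mul contDiff_id)
    have hQcd : ContDiff ℝ (⊤ : WithTop ℕ∞) Q := by
      rw [hQ_def]
      exact (ContDiff.sum fun ε _ => (contDiff_const.mul ((hacd ε).pow 2))).div_const _
    have hVcd : ContDiff ℝ (⊤ : WithTop ℕ∞) V := by
      rw [hV_def]
      exact contDiff_const.mul ((ContDiff.sum fun ε _ =>
        (contDiff_const.mul ((hacd ε).mul contDiff_const))).div_const _)
    have hucd : ContDiff ℝ (⊤ : WithTop ℕ∞)
        (fun s => σa⁻¹ ^ 2 + Q s / (κ ^ 2 * N ^ (2 * γ))) :=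
      contDiff_const.add (hQcd.div_const _)
    exact (contDiff_const.mul (hucd.log fun s => (hu s).ne')).sub
      ((hVcd.pow 2).div (contDiff_const.mul hucd) fun s => by
        have := hu s; positivity)
  · -- the bound at t
    -- pointwise identities
    have hQt : Q t = (∑ ε, max (a ε + b ε * t) 0 ^ 2) / 2 ^ d := by
      simp only [hQ_def]
      congr 1
      refine Finset.sum_congr rfl fun ε _ => ?_
      simp only [π]
      split_ifs with h
      · rw [max_eq_left h.le]; ring
      · rw [max_eq_right (not_lt.1 h)]; ring
    have hQ1t : Q1 t = 2 * (∑ ε, max (a ε + b ε * t) 0 * b ε) / 2 ^ d := by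
      simp only [hQ1_def]
      rw [Finset.mul_sum]
      congr 1
      refine Finset.sum_congr rfl fun ε _ => ?_
      simp only [π]
      split_ifs with h
      · rw [max_eq_left h.le]; ring
      · rw [max_eq_right (not_lt.1 h)]; ring
    have hVt : V t = (1 - mS) * ((∑ ε, max (a ε + b ε * t) 0 * χ ε) / 2 ^ d) := by
      simp only [hV_def]
      congr 2
      refine Finset.sum_congr rfl fun ε _ => ?_
      simp only [π]
      split_ifs with h
      · rw [max_eq_left h.le]; ring
      · rw [max_eq_right (not_lt.1 h)]; ring
    have hcard : (∑ _ε : Fin d → Bool, (1:ℝ)) = 2 ^ d := by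
      rw [Finset.sum_const, Finset.card_univ, Fintype.card_fun]
      simp
    -- Cauchy–Schwarz facts
    have hCSb : (∑ ε, max (a ε + b ε * t) 0 * b ε) ^ 2
        ≤ (∑ ε, max (a ε + b ε * t) 0 ^ 2) * 2 ^ d := by
      have h := Finset.sum_mul_sq_le_sq_mul_sq Finset.univ
        (fun ε => max (a ε + b ε * t) 0) b
      have hb : (∑ ε, b ε ^ 2) = (2:ℝ) ^ d := by
        rw [← hcard]
        exact Finset.sum_congr rfl fun ε _ => bc_sq j ε
      rwa [hb] at h
    have hCSχ : (∑ ε, max (a ε + b ε * t) 0 * χ ε) ^ 2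
        ≤ (∑ ε, max (a ε + b ε * t) 0 ^ 2) * 2 ^ d := by
      have h := Finset.sum_mul_sq_le_sq_mul_sq Finset.univ
        (fun ε => max (a ε + b ε * t) 0) χ
      have hb : (∑ ε, χ ε ^ 2) = (2:ℝ) ^ d := by
        rw [← hcard]
        exact Finset.sum_congr rfl fun ε _ => chic_sq S ε
      rwa [hb] at h
    have hm2 : (1 - mS) ^ 2 ≤ 4 := by nlinarith [abs_le.1 hmS]
    -- scalar facts
    have hB2 : (Q1 t) ^ 2 ≤ 4 * Q t := by
      rw [hQ1t, hQt]
      exact sq_div_le hD hCSb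
    have hW2 : (V t) ^ 2 ≤ 4 * Q t := by
      rw [hVt, hQt]
      exact sq_div_le' hD hCSχ hm2
    have hWB : |V t * Q1 t| ≤ 4 * Q t := by
      have hsq : (V t * Q1 t) ^ 2 ≤ (4 * Q t) ^ 2 := by
        nlinarith [hB2, hW2, sq_nonneg (V t), sq_nonneg (Q1 t), hQnn t,
          mul_le_mul_of_nonneg_right hW2 (sq_nonneg (Q1 t)),
          mul_le_mul_of_nonneg_left hB2 (by positivity : (0:ℝ) ≤ 4 * Q t)]
      calc |V t * Q1 t| = Real.sqrt ((V t * Q1 t) ^ 2) := (Real.sqrt_sq_eq_abs _).symm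
        _ ≤ Real.sqrt ((4 * Q t) ^ 2) := Real.sqrt_le_sqrt hsq
        _ = 4 * Q t := Real.sqrt_sq (by positivity)
    have hV1abs : |V1| ≤ 2 := by
      rw [hV1_def, abs_mul, abs_div]
      have h1 : |∑ ε, π ε * (b ε * χ ε)| ≤ 2 ^ d := by
        calc |∑ ε, π ε * (b ε * χ ε)| ≤ ∑ ε, |π ε * (b ε * χ ε)| :=
              Finset.abs_sum_le_sum_abs _ _
          _ ≤ ∑ _ε : Fin d → Bool, (1:ℝ) := by
              refine Finset.sum_le_sum fun ε _ => ?_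
              rw [abs_mul, abs_mul, bc_abs, chic_abs]
              have := hπ01 ε
              rw [abs_of_nonneg this.1]
              simpa using this.2
          _ = 2 ^ d := hcard
      have h2 : |(1:ℝ) - mS| ≤ 2 := by
        have := abs_le.1 hmS
        rw [abs_le]; constructor <;> linarith
      have h3 : |(2:ℝ) ^ d| = 2 ^ d := abs_of_pos hD
      rw [h3]
      calc |1 - mS| * (|∑ ε, π ε * (b ε * χ ε)| / 2 ^ d) ≤ 2 * (2 ^ d / 2 ^ d) := by
            apply mul_le_mul h2 _ (by positivity) (by norm_num)
            gcongr
        _ = 2 := by rw [div_self hD.ne']; ring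
    have hQ2a : 0 ≤ Q2 := by
      rw [hQ2_def]
      apply div_nonneg _ hD.le
      refine Finset.sum_nonneg fun ε _ => ?_
      have hb := bc_sq j ε
      have := (hπ01 ε).1
      nlinarith
    have hQ2b : Q2 ≤ 2 := by
      rw [hQ2_def, div_le_iff₀ hD]
      calc (∑ ε, π ε * (2 * b ε * b ε)) ≤ ∑ _ε : Fin d → Bool, (2:ℝ) := by
            refine Finset.sum_le_sum fun ε _ => ?_
            have hb := bc_sq j ε
            have h01 := hπ01 ε
            nlinarith
        _ = 2 * 2 ^ d := by
            rw [Finset.sum_const, Finset.card_univ, Fintype.card_fun]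
            simp
            ring
    have hA : σa⁻¹ ^ 2 ≤ σa⁻¹ ^ 2 + Q t / (κ ^ 2 * N ^ (2 * γ)) := by
      have := hQnn t
      have : 0 ≤ Q t / (κ ^ 2 * N ^ (2 * γ)) := by positivity
      linarith
    have hQT : Q t = κ ^ 2 * N ^ (2 * γ)
        * ((σa⁻¹ ^ 2 + Q t / (κ ^ 2 * N ^ (2 * γ))) - σa⁻¹ ^ 2) := by
      field_simp
      ring
    exact scalar_bound hc hK hC hA hQT hB2 hW2 hWB hV1abs hQ2a hQ2b


theorem stmt11 (σa κ N γ : ℝ) (hσa : 0 < σa) (hκ : 0 < κ) (hN : 0 < N) :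
    ∃ L : ℝ, 0 < L ∧
      ∀ (d : ℕ), 1 ≤ d → ∀ (S : Finset (Fin d)) (mS : ℝ), |mS| ≤ 1 →
        ∀ (j : Fin d) (w : Fin d → ℝ),
          -- the one-dimensional section in coordinate j is continuous
          Continuous (fun t : ℝ => gfun d S σa κ N γ mS (Function.update w j t)) ∧
          -- it is piecewise smooth with finitely many non-smooth points
          (∃ E : Finset ℝ, ∀ t ∉ E,
            ContDiffAt ℝ (⊤ : ℕ∞)
              (fun t : ℝ => gfun d S σa κ N γ mS (Function.update w j t)) t) ∧
          -- wherever it is twice differentiable, the second derivative is ≤ L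
          ∀ t : ℝ,
            DifferentiableAt ℝ
              (fun t : ℝ => gfun d S σa κ N γ mS (Function.update w j t)) t →
            DifferentiableAt ℝ
              (deriv fun t : ℝ => gfun d S σa κ N γ mS (Function.update w j t)) t →
            |deriv (deriv fun t : ℝ =>
              gfun d S σa κ N γ mS (Function.update w j t)) t| ≤ L := by
  have hNγ : (0:ℝ) < N ^ (2 * γ) := Real.rpow_pos_of_pos hN _
  have hKc : (0:ℝ) < κ ^ 2 * N ^ (2 * γ) * σa⁻¹ ^ 2 :=
    mul_pos (mul_pos (pow_pos hκ 2) hNγ) (pow_pos (inv_pos.2 hσa) 2)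
  have hCc : (0:ℝ) < 2 * κ ^ 4 * N ^ (2 * γ) * σa⁻¹ ^ 2 :=
    mul_pos (mul_pos (mul_pos two_pos (pow_pos hκ 4)) hNγ) (pow_pos (inv_pos.2 hσa) 2)
  refine ⟨3 / (κ ^ 2 * N ^ (2 * γ) * σa⁻¹ ^ 2)
      + 80 / (2 * κ ^ 4 * N ^ (2 * γ) * σa⁻¹ ^ 2),
    add_pos (div_pos (by norm_num) hKc) (div_pos (by norm_num) hCc), ?_⟩
  intro d _hd S mS hmS j w
  set f : ℝ → ℝ := fun t => gfun d S σa κ N γ mS (Function.update w j t) with hf_def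
  -- kink set
  set E : Finset ℝ := Finset.image (fun ε => -(ac w j ε) * bc j ε) Finset.univ with hE_def
  have hnotE : ∀ t : ℝ, t ∉ E → ∀ ε : Fin d → Bool, ac w j ε + bc j ε * t ≠ 0 := by
    intro t htE ε h
    apply htE
    rw [hE_def, Finset.mem_image]
    refine ⟨ε, Finset.mem_univ ε, ?_⟩
    have hb := bc_sq j ε
    linear_combination (-(bc j ε)) * h + t * hb
  -- continuity
  have hSigNN : ∀ t : ℝ, 0 ≤ SigmaFun d (Function.update w j t) := by
    intro t
    rw [Sigma_sec]
    exact div_nonneg (Finset.sum_nonneg fun ε _ => sq_nonneg _) (by positivity)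
  have hupos : ∀ t : ℝ, 0 < σa⁻¹ ^ 2
      + SigmaFun d (Function.update w j t) / (κ ^ 2 * N ^ (2 * γ)) := by
    intro t
    have h1 := hSigNN t
    have h2 : 0 ≤ SigmaFun d (Function.update w j t) / (κ ^ 2 * N ^ (2 * γ)) := by positivity
    have : (0:ℝ) < σa⁻¹ ^ 2 := by positivity
    linarith
  have hScont : Continuous (fun t => SigmaFun d (Function.update w j t)) := by
    have he : (fun t => SigmaFun d (Function.update w j t))
        = fun t => (∑ ε : Fin d → Bool, max (ac w j ε + bc j ε * t) 0 ^ 2) / 2 ^ d :=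
      funext fun t => Sigma_sec w j t
    rw [he]
    exact (continuous_finset_sum _ fun ε _ =>
      ((continuous_const.add (continuous_const.mul continuous_id)).max continuous_const).pow
        2).div_const _
  have hJcont : Continuous (fun t => Jfun d S (Function.update w j t)) := by
    have he : (fun t => Jfun d S (Function.update w j t))
        = fun t => (∑ ε : Fin d → Bool, max (ac w j ε + bc j ε * t) 0 * chic S ε) / 2 ^ d :=
      funext fun t => J_sec S w j t
    rw [he]
    exact (continuous_finset_sum _ fun ε _ =>
      ((continuous_const.add (continuous_const.mul continuous_id)).max continuous_const).mul
        continuous_const).div_const _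
  have hcont : Continuous f := by
    rw [hf_def]
    simp only [gfun]
    apply Continuous.sub
    · apply continuous_const.mul
      apply Continuous.log
      · exact continuous_const.add (hScont.div_const _)
      · intro x
        exact (hupos x).ne'
    · apply Continuous.div
      · exact (hJcont.sub (continuous_const.mul hJcont)).pow 2
      · exact continuous_const.mul (continuous_const.add (hScont.div_const _))
      · intro x
        have h1 : (0:ℝ) < 2 * κ ^ 4 * N ^ (2 * γ) := by positivity
        exact (mul_pos h1 (hupos x)).ne'
  refine ⟨hcont, ⟨E, ?_⟩, ?_⟩
  · -- piecewise smoothness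
    intro t htE
    obtain ⟨F, F1, F2, heq, hFcd, _, _, _⟩ :=
      local_data σa κ N γ hσa hκ hN S mS hmS j w t (hnotE t htE)
    exact (hFcd.contDiffAt.congr_of_eventuallyEq heq).of_le le_top
  · -- second-derivative bound
    intro t h1 h2
    apply bridge E hcont ?_ ?_ h1 h2
    · intro s hs
      obtain ⟨F, F1, F2, heq, _, hFd, _, _⟩ :=
        local_data σa κ N γ hσa hκ hN S mS hmS j w s (hnotE s hs)
      exact ((hFd s).congr_of_eventuallyEq heq).differentiableAt
    · intro s hs
      obtain ⟨F, F1, F2, heq, _, hFd, hF1d, hb⟩ :=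
        local_data σa κ N γ hσa hκ hN S mS hmS j w s (hnotE s hs)
      refine ⟨F2 s, hb, ?_⟩
      have hderiv_eq : deriv f =ᶠ[𝓝 s] F1 :=
        heq.deriv.trans (Filter.Eventually.of_forall fun u => (hFd u).deriv)
      exact (hF1d s).congr_of_eventuallyEq hderiv_eq
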